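/- arXiv:cs/0502042 — 2 statements merged into one kernel-verified Lean document; each statement's English description precedes it below -/
import Mathlib

section
/- (Rank-one update of resolvent trace, Silverstein–Bai Lemma 2.6) For z ∈ ℂ⁺, N×N Hermitian matrices A and B, τ ∈ ℝ, and q ∈ ℂ^N: |tr(((B - zI)⁻¹ - (B + τ qq† - zI)⁻¹)A)| ≤ ‖A‖ / Im(z). -/
/-!
By the resolvent identity and Sherman–Morrison, with `R = (B - z)⁻¹` and `c = ⟨q, R q⟩`,
`tr((R - (B + τ qq† - z)⁻¹) A) = τ ⟨R† q, A R q⟩ / (1 + τ c)`.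
As `B` is Hermitian, `Im c = Im z ‖R q‖² = Im z ‖R† q‖²`, so the numerator is at most
`|τ| ‖A‖ Im c / Im z`, while `|1 + τ c| ≥ |Im (τ c)| = |τ| Im c`.
-/

open Matrix

namespace Matrix

variable {n : Type*} [Fintype n]

lemma star_dotProduct_self_eq_norm_sq (v : n → ℂ) :
    star v ⬝ᵥ v = ((‖WithLp.toLp 2 v‖ ^ 2 : ℝ) : ℂ) := by
  rw [dotProduct_comm, ← EuclideanSpace.inner_toLp_toLp, inner_self_eq_norm_sq_to_K]
  norm_cast

lemma norm_star_dotProduct_mulVec_le [DecidableEq n] (A : Matrix n n ℂ) (w u : n → ℂ) :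
    ‖star w ⬝ᵥ (A *ᵥ u)‖ ≤
      ‖toEuclideanCLM (𝕜 := ℂ) A‖ * ‖WithLp.toLp 2 w‖ * ‖WithLp.toLp 2 u‖ := by
  have hinner : star w ⬝ᵥ (A *ᵥ u) =
      inner ℂ (WithLp.toLp 2 w) (toEuclideanCLM (𝕜 := ℂ) A (WithLp.toLp 2 u)) := by
    rw [toEuclideanCLM_toLp, EuclideanSpace.inner_toLp_toLp, dotProduct_comm]
  calc ‖star w ⬝ᵥ (A *ᵥ u)‖
      ≤ ‖WithLp.toLp 2 w‖ * ‖toEuclideanCLM (𝕜 := ℂ) A (WithLp.toLp 2 u)‖ :=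
        hinner ▸ norm_inner_le_norm _ _
    _ ≤ ‖WithLp.toLp 2 w‖ * (‖toEuclideanCLM (𝕜 := ℂ) A‖ * ‖WithLp.toLp 2 u‖) := by
        gcongr
        exact ContinuousLinearMap.le_opNorm _ _
    _ = _ := by ring

lemma star_dotProduct_conjTranspose_mulVec (M : Matrix n n ℂ) (v : n → ℂ) :
    star v ⬝ᵥ (Mᴴ *ᵥ v) = star (star v ⬝ᵥ (M *ᵥ v)) := by
  rw [star_dotProduct, star_mulVec, conjTranspose_conjTranspose, dotProduct_mulVec]

section Resolvent

variable [DecidableEq n] {M : Matrix n n ℂ}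

lemma IsHermitian.im_star_dotProduct_sub_smul_one_mulVec (hM : M.IsHermitian) (z : ℂ)
    (v : n → ℂ) :
    (star v ⬝ᵥ ((M - z • 1) *ᵥ v)).im = -(z.im * ‖WithLp.toLp 2 v‖ ^ 2) := by
  have hreal := hM.im_star_dotProduct_mulVec_self v
  rw [sub_mulVec, smul_mulVec, one_mulVec, dotProduct_sub, dotProduct_smul,
    star_dotProduct_self_eq_norm_sq, smul_eq_mul, Complex.sub_im, Complex.im_mul_ofReal]
  simp only [RCLike.im_to_complex] at hreal
  rw [hreal, zero_sub]

lemma IsHermitian.isUnit_det_sub_smul_one (hM : M.IsHermitian) {z : ℂ} (hz : z.im ≠ 0) :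
    IsUnit (M - z • 1).det := by
  rw [← isUnit_iff_isUnit_det, ← mulVec_injective_iff_isUnit]
  have hker : ∀ v, (M - z • 1) *ᵥ v = 0 → v = 0 := by
    intro v hv
    have him := hM.im_star_dotProduct_sub_smul_one_mulVec z v
    rw [hv, dotProduct_zero, Complex.zero_im, zero_eq_neg] at him
    simpa [hz] using him
  intro x y hxy
  exact sub_eq_zero.mp (hker _ (by rw [mulVec_sub, hxy, sub_self]))

lemma IsHermitian.conjTranspose_inv_sub_smul_one (hM : M.IsHermitian) (z : ℂ) :
    (M - z • 1)⁻¹ᴴ = (M - star z • 1)⁻¹ := by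
  rw [conjTranspose_nonsing_inv, conjTranspose_sub, hM.eq, conjTranspose_smul,
    conjTranspose_one]

lemma IsHermitian.im_star_dotProduct_inv_sub_smul_one_mulVec (hM : M.IsHermitian) {z : ℂ}
    (hz : z.im ≠ 0) (q : n → ℂ) :
    (star q ⬝ᵥ ((M - z • 1)⁻¹ *ᵥ q)).im = z.im * ‖WithLp.toLp 2 ((M - z • 1)⁻¹ *ᵥ q)‖ ^ 2 := by
  set u := (M - z • 1)⁻¹ *ᵥ q
  have hq : (M - z • 1) *ᵥ u = q := by
    rw [mulVec_mulVec, mul_nonsing_inv _ (hM.isUnit_det_sub_smul_one hz), one_mulVec]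
  rw [star_dotProduct, ← hq, Complex.star_def, Complex.conj_im,
    hM.im_star_dotProduct_sub_smul_one_mulVec, neg_neg]

lemma IsHermitian.norm_inv_sub_smul_one_mulVec_eq_conjTranspose (hM : M.IsHermitian) {z : ℂ}
    (hz : z.im ≠ 0) (q : n → ℂ) :
    ‖WithLp.toLp 2 ((M - z • 1)⁻¹ *ᵥ q)‖ = ‖WithLp.toLp 2 ((M - z • 1)⁻¹ᴴ *ᵥ q)‖ := by
  have hz' : (star z).im ≠ 0 := by simpa [Complex.star_def] using hz
  have h := hM.im_star_dotProduct_inv_sub_smul_one_mulVec hz' q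
  rw [← hM.conjTranspose_inv_sub_smul_one, star_dotProduct_conjTranspose_mulVec,
    Complex.star_def, Complex.conj_im, hM.im_star_dotProduct_inv_sub_smul_one_mulVec hz,
    Complex.conj_im] at h
  refine (sq_eq_sq₀ (norm_nonneg _) (norm_nonneg _)).mp (mul_left_cancel₀ hz ?_)
  linarith

end Resolvent

section ShermanMorrison

variable {K : Type*} [Field K] [DecidableEq n] {M : Matrix n n K} {a b : n → K}

/-- Sherman–Morrison, applied to the vector `a`. The denominator cannot vanish: otherwise
`(M + a bᵀ) M⁻¹ a = (1 + b ⬝ᵥ M⁻¹ a) a` would force `a = 0`, and then it equals `1`. -/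
lemma inv_add_vecMulVec_mulVec (hM : IsUnit M.det) (hM' : IsUnit (M + vecMulVec a b).det) :
    (M + vecMulVec a b)⁻¹ *ᵥ a = (1 + b ⬝ᵥ (M⁻¹ *ᵥ a))⁻¹ • (M⁻¹ *ᵥ a) := by
  set u := M⁻¹ *ᵥ a
  set d := 1 + b ⬝ᵥ u
  have hMu : M *ᵥ u = a := by rw [mulVec_mulVec, mul_nonsing_inv _ hM, one_mulVec]
  have hu : u = d • ((M + vecMulVec a b)⁻¹ *ᵥ a) := by
    have h : (M + vecMulVec a b) *ᵥ u = d • a := by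
      rw [add_mulVec, hMu, vecMulVec_mulVec, op_smul_eq_smul, add_smul, one_smul]
    rw [← mulVec_smul, ← h, mulVec_mulVec, nonsing_inv_mul _ hM', one_mulVec]
  have hd : d ≠ 0 := by
    intro hd
    have ha : a = 0 := by rw [← hMu, hu, hd, zero_smul, mulVec_zero]
    simp [d, u, ha] at hd
  rw [hu, smul_smul, inv_mul_cancel₀ hd, one_smul]

lemma trace_inv_sub_inv_add_vecMulVec_mul (hM : IsUnit M.det)
    (hM' : IsUnit (M + vecMulVec a b).det) (A : Matrix n n K) :
    ((M⁻¹ - (M + vecMulVec a b)⁻¹) * A).trace =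
      (1 + b ⬝ᵥ (M⁻¹ *ᵥ a))⁻¹ * (b ⬝ᵥ ((M⁻¹ * A * M⁻¹) *ᵥ a)) := by
  set X := M + vecMulVec a b
  have hresolvent : M⁻¹ - X⁻¹ = X⁻¹ * vecMulVec a b * M⁻¹ :=
    calc M⁻¹ - X⁻¹ = X⁻¹ * (X - M) * M⁻¹ := by
          rw [Matrix.mul_sub, Matrix.sub_mul, nonsing_inv_mul _ hM', Matrix.one_mul,
            Matrix.mul_assoc, mul_nonsing_inv _ hM, Matrix.mul_one]
      _ = X⁻¹ * vecMulVec a b * M⁻¹ := by rw [add_sub_cancel_left]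
  rw [hresolvent, Matrix.mul_assoc, Matrix.mul_assoc, trace_mul_comm, Matrix.mul_assoc,
    vecMulVec_mul, trace_vecMulVec, dotProduct_comm, ← dotProduct_mulVec, ← mulVec_mulVec,
    inv_add_vecMulVec_mulVec hM hM', mulVec_smul, dotProduct_smul, smul_eq_mul,
    mulVec_mulVec]

end ShermanMorrison

end Matrix

lemma Complex.norm_inv_one_add_mul_mul_le {τ K : ℝ} {c S : ℂ} (hK : 0 ≤ K) (hc : 0 ≤ c.im)
    (hS : ‖S‖ ≤ K * c.im) :
    ‖(1 + τ * c)⁻¹ * (τ * S)‖ ≤ K := by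
  rcases eq_or_ne (1 + τ * c) 0 with hd | hd
  · simpa [hd] using hK
  rw [norm_mul, norm_inv, inv_mul_le_iff₀ (norm_pos_iff.mpr hd)]
  calc ‖(τ : ℂ) * S‖ = |τ| * ‖S‖ := by rw [norm_mul, Complex.norm_real, Real.norm_eq_abs]
    _ ≤ |τ| * (K * c.im) := by gcongr
    _ = K * |(1 + τ * c).im| := by
        rw [Complex.add_im, Complex.one_im, zero_add, Complex.im_ofReal_mul, abs_mul,
          abs_of_nonneg hc]
        ring
    _ ≤ ‖1 + τ * c‖ * K := by rw [mul_comm]; gcongr; exact Complex.abs_im_le_norm _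

theorem rank_one_resolvent_trace_bound_general {N : ℕ} (z : ℂ) (hz : 0 < z.im)
    (A B : Matrix (Fin N) (Fin N) ℂ) (hB : B.IsHermitian)
    (τ : ℝ) (q : Fin N → ℂ) :
    Norm.norm
        ((((B - z • (1 : Matrix (Fin N) (Fin N) ℂ))⁻¹ -
            (B + (τ : ℂ) • vecMulVec q (star q) - z • (1 : Matrix (Fin N) (Fin N) ℂ))⁻¹) * A).trace)
      ≤ ‖Matrix.toEuclideanCLM (𝕜 := ℂ) A‖ / z.im := by
  have hrank : B + (τ : ℂ) • vecMulVec q (star q) - z • 1 =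
      (B - z • 1) + vecMulVec ((τ : ℂ) • q) (star q) := by
    rw [smul_vecMulVec]; abel
  have hτqq : ((τ : ℂ) • vecMulVec q (star q)).IsHermitian := by
    rw [IsHermitian, conjTranspose_smul, conjTranspose_vecMulVec, star_star, Complex.star_def,
      Complex.conj_ofReal]
  have hdet := hB.isUnit_det_sub_smul_one hz.ne'
  have hdet' := (hB.add hτqq).isUnit_det_sub_smul_one hz.ne'
  rw [hrank] at hdet' ⊢
  rw [trace_inv_sub_inv_add_vecMulVec_mul hdet hdet', mulVec_smul, mulVec_smul, dotProduct_smul,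
    dotProduct_smul, smul_eq_mul, smul_eq_mul]
  have hc := hB.im_star_dotProduct_inv_sub_smul_one_mulVec hz.ne' q
  have hnorm := hB.norm_inv_sub_smul_one_mulVec_eq_conjTranspose hz.ne' q
  set R := (B - z • 1)⁻¹
  apply Complex.norm_inv_one_add_mul_mul_le (div_nonneg (norm_nonneg _) hz.le)
    (by rw [hc]; positivity)
  calc ‖star q ⬝ᵥ (R * A * R) *ᵥ q‖ = ‖star (Rᴴ *ᵥ q) ⬝ᵥ (A *ᵥ (R *ᵥ q))‖ := by
        rw [star_mulVec, conjTranspose_conjTranspose, ← dotProduct_mulVec, mulVec_mulVec,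
          mulVec_mulVec]
    _ ≤ ‖toEuclideanCLM (𝕜 := ℂ) A‖ * ‖WithLp.toLp 2 (Rᴴ *ᵥ q)‖ * ‖WithLp.toLp 2 (R *ᵥ q)‖ :=
        norm_star_dotProduct_mulVec_le _ _ _
    _ = ‖toEuclideanCLM (𝕜 := ℂ) A‖ / z.im * (star q ⬝ᵥ (R *ᵥ q)).im := by
        rw [hc, ← hnorm]
        field_simp

/-- Silverstein–Bai Lemma 2.6 (rank-one update of resolvent trace): for `z ∈ ℂ⁺`,
Hermitian `A`, `B`, `τ ∈ ℝ` and `q ∈ ℂ^N`,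
`|tr(((B - zI)⁻¹ - (B + τ qq† - zI)⁻¹)A)| ≤ ‖A‖ / Im(z)`. -/
theorem rank_one_resolvent_trace_bound {N : ℕ} (z : ℂ) (hz : 0 < z.im)
    (A B : Matrix (Fin N) (Fin N) ℂ) (hA : A.IsHermitian) (hB : B.IsHermitian)
    (τ : ℝ) (q : Fin N → ℂ) :
    Norm.norm
        ((((B - z • (1 : Matrix (Fin N) (Fin N) ℂ))⁻¹ -
            (B + (τ : ℂ) • vecMulVec q (star q) - z • (1 : Matrix (Fin N) (Fin N) ℂ))⁻¹) * A).trace)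
      ≤ ‖Matrix.toEuclideanCLM (𝕜 := ℂ) A‖ / z.im :=
  rank_one_resolvent_trace_bound_general z hz A B hB τ q
end

section
/- For the limiting exponential-window distribution with CDF F_W(w) = 1 + (L̄/η) ln w on [e^{-η/L̄}, 1] and any real r > 0: E[W/|1+rW|²] = E[W]/((1+r)(1+e^{-η/L̄} r)), where E[W] = (L̄/η)(1 - e^{-η/L̄}). -/
/-!
Against the density `(L/η)/w` the factor `w` of `w/(1+rw)²` cancels, leaving `(L/η)/(1+rw)²`,
which has the antiderivative `(L/η) · w/(1+rw)`. Evaluating it between `a = e^{-η/L}` and `1`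
gives `(L/η)(1-a)/((1+r)(1+ra))`, and `(L/η)(1-a)` is exactly `E[W]`.
-/

open MeasureTheory

theorem hasDerivAt_div_one_add_mul {r w : ℝ} (hw : 1 + r * w ≠ 0) :
    HasDerivAt (fun x => x / (1 + r * x)) (1 / (1 + r * w) ^ 2) w := by
  have hden : HasDerivAt (fun x => 1 + r * x) r w := by
    simpa using ((hasDerivAt_id' w).const_mul r).const_add 1
  refine ((hasDerivAt_id' w).div hden hw).congr_deriv ?_
  ring

theorem integral_one_div_one_add_mul_sq {r a b : ℝ} (hab : a ≤ b)
    (ha : 0 < 1 + r * a) (hb : 0 < 1 + r * b) :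
    ∫ w in a..b, 1 / (1 + r * w) ^ 2 = (b - a) / ((1 + r * a) * (1 + r * b)) := by
  have hpos : ∀ w ∈ Set.uIcc a b, 0 < 1 + r * w := by
    intro w hw
    rw [Set.uIcc_of_le hab] at hw
    -- `1 + r * w` is affine in `w`, so it is positive between two points where it is.
    rcases le_total 0 r with hr | hr
    · nlinarith [hw.1]
    · nlinarith [hw.2]
  have hcont : ContinuousOn (fun w => 1 / (1 + r * w) ^ 2) (Set.uIcc a b) :=
    continuousOn_const.div (by fun_prop) fun w hw => (pow_pos (hpos w hw) 2).ne'
  rw [intervalIntegral.integral_eq_sub_of_hasDerivAt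
    (fun w hw => hasDerivAt_div_one_add_mul (hpos w hw).ne') hcont.intervalIntegrable,
    div_sub_div _ _ hb.ne' ha.ne']
  ring

/-- For the limiting exponential-window distribution with density `(L̄/η)/w` on
`[e^{-η/L̄}, 1]` and `r > 0`:
`E[W/(1+rW)²] = E[W]/((1+r)(1+e^{-η/L̄} r))` where `E[W] = (L̄/η)(1 - e^{-η/L̄})`. -/
theorem exp_window_W12 (η L r : ℝ) (hη : 0 < η) (hL : 0 < L) (hr : 0 < r) :
    ∫ w in Set.Icc (Real.exp (-η / L)) 1, (L / η / w) * (w / (1 + r * w) ^ 2) =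
      ((L / η) * (1 - Real.exp (-η / L))) / ((1 + r) * (1 + Real.exp (-η / L) * r)) := by
  set a := Real.exp (-η / L)
  have ha0 : 0 < a := Real.exp_pos _
  have ha1 : a ≤ 1 :=
    Real.exp_le_one_iff.mpr (by rw [neg_div]; exact neg_nonpos.mpr (by positivity))
  calc ∫ w in Set.Icc a 1, (L / η / w) * (w / (1 + r * w) ^ 2)
      = ∫ w in Set.Icc a 1, L / η * (1 / (1 + r * w) ^ 2) :=
        setIntegral_congr_fun measurableSet_Icc fun w hw => by
          have hw0 : w ≠ 0 := (ha0.trans_le hw.1).ne'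
          field_simp
    _ = L / η * ∫ w in a..1, 1 / (1 + r * w) ^ 2 := by
        rw [integral_const_mul, integral_Icc_eq_integral_Ioc,
          ← intervalIntegral.integral_of_le ha1]
    _ = _ := by
        rw [integral_one_div_one_add_mul_sq ha1 (by positivity) (by positivity)]
        ring
end
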